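/- Let M ≥ 2, N_v ≥ 2, T ≥ 1, F ∈ ℂ^{M×T}, and u ∈ ℝ. Define G = (π²(N_v−1)(2N_v−1)/6) · φ_M(u)^H F F^H φ_M(u) − π(N_v−1) · Im{ (∂φ_M(u)/∂u)^H F F^H φ_M(u) }. Let P_{u,⊥} = φ_M(u)φ_M(u)^H/‖φ_M(u)‖² + φ^⊥_M(u)(φ^⊥_M(u))^H/‖φ^⊥_M(u)‖² be the orthogonal projection onto the span of φ_M(u) and φ^⊥_M(u), and let λ_max(F^H P_{u,⊥} F) be the largest eigenvalue of the Hermitian matrix F^H P_{u,⊥} F. If φ_M(u)^H F F^H φ_M(u)/‖φ_M(u)‖² ≥ λ_max(F^H P_{u,⊥} F)/4, then G ≥ 0. -/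

import Mathlib

open Matrix

/-- Steering vector of a ULA: `(φ_M(u))_n = exp(iπnu)`. -/
noncomputable def steer (M : ℕ) (u : ℝ) : Fin M → ℂ :=
  fun n => Complex.exp (Complex.I * (Real.pi * u * n))

/-- Entrywise derivative of the steering vector: `(∂φ_M(u)/∂u)_n = iπn·exp(iπnu)`. -/
noncomputable def dsteer (M : ℕ) (u : ℝ) : Fin M → ℂ :=
  fun n => Complex.I * (Real.pi * n) * Complex.exp (Complex.I * (Real.pi * u * n))

/-- `(φ^⊥_M(u))_n = (n − (M−1)/2)·exp(iπnu)`. -/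
noncomputable def steerPerp (M : ℕ) (u : ℝ) : Fin M → ℂ :=
  fun n => (((n : ℝ) - ((M : ℝ) - 1) / 2 : ℝ) : ℂ) *
    Complex.exp (Complex.I * (Real.pi * u * n))

/-!
Write `φ = steer M u`, `ψ = steerPerp M u`, `S = φᴴ F Fᴴ φ = ‖Fᴴ φ‖²` and `z = ψᴴ F Fᴴ φ`.
Since `∂φ/∂u = iπ (ψ + (M-1)/2 • φ)`, we get `G = π² (N_v-1) ((2N_v-1)/6 S + (M-1)/2 S + Re z)`.
The Rayleigh quotient of `Fᴴ P F` at `Fᴴ φ` is `S²/M + |z|²/‖ψ‖²` with `‖ψ‖² = M(M²-1)/12`;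
it is at most `λ_max S ≤ 4 S²/M`, so `|z|² ≤ (M²-1) S²/4`. Hence `Re z ≥ -M S/2` and the
bracket is at least `(N_v-2) S/3 ≥ 0`.
-/

lemma sum_range_sub_sq (M : ℕ) (c : ℝ) :
    ∑ n ∈ Finset.range M, ((n : ℝ) - c) ^ 2
      = M * (M - 1) * (2 * M - 1) / 6 - c * M * (M - 1) + M * c ^ 2 := by
  induction M with
  | zero => simp
  | succ m ih => rw [Finset.sum_range_succ, ih]; push_cast; ring

lemma sum_fin_sub_half_sq (M : ℕ) :
    ∑ n : Fin M, ((n : ℝ) - ((M : ℝ) - 1) / 2) ^ 2 = M * ((M : ℝ) ^ 2 - 1) / 12 := by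
  rw [Fin.sum_univ_eq_sum_range (fun n => ((n : ℝ) - ((M : ℝ) - 1) / 2) ^ 2), sum_range_sub_sq]
  ring

open scoped MatrixOrder ComplexOrder in
theorem Matrix.IsHermitian.re_dotProduct_mulVec_le_iSup_eigenvalues_mul
    {𝕜 n : Type*} [RCLike 𝕜] [Fintype n] [DecidableEq n] {A : Matrix n n 𝕜}
    (hA : A.IsHermitian) (x : n → 𝕜) :
    RCLike.re (star x ⬝ᵥ A *ᵥ x) ≤ (⨆ i, hA.eigenvalues i) * RCLike.re (star x ⬝ᵥ x) := by
  have hle : A ≤ algebraMap ℝ (Matrix n n 𝕜) (⨆ i, hA.eigenvalues i) := by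
    refine le_algebraMap_of_spectrum_le fun r hr => ?_
    obtain ⟨i, rfl⟩ := hA.spectrum_real_eq_range_eigenvalues ▸ hr
    exact le_ciSup (Set.finite_range _).bddAbove i
  have := (RCLike.nonneg_iff.mp ((Matrix.le_iff.mp hle).dotProduct_mulVec_nonneg x)).1
  simpa [sub_mulVec, dotProduct_sub, Algebra.algebraMap_eq_smul_one, smul_mulVec,
    dotProduct_smul, RCLike.smul_re] using this

section QuadraticForms

variable {n m : Type*} [Fintype n] [Fintype m]

lemma star_dotProduct_conjTranspose_mul_mul_mulVec {R : Type*} [CommRing R] [StarRing R]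
    (B : Matrix m n R) (P : Matrix m m R) (x : n → R) :
    star x ⬝ᵥ (Bᴴ * P * B) *ᵥ x = star (B *ᵥ x) ⬝ᵥ P *ᵥ (B *ᵥ x) := by
  rw [← mulVec_mulVec, ← mulVec_mulVec, dotProduct_mulVec, star_mulVec]

lemma star_dotProduct_mul_conjTranspose_mulVec {R : Type*} [CommRing R] [StarRing R]
    (B : Matrix m n R) (v : m → R) :
    star v ⬝ᵥ (B * Bᴴ) *ᵥ v = star (Bᴴ *ᵥ v) ⬝ᵥ (Bᴴ *ᵥ v) := by
  rw [← mulVec_mulVec, dotProduct_mulVec, star_mulVec, conjTranspose_conjTranspose]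

lemma star_dotProduct_vecMulVec_star_mulVec {R : Type*} [CommRing R] [StarRing R]
    (v y : n → R) :
    star y ⬝ᵥ vecMulVec v (star v) *ᵥ y = star (star v ⬝ᵥ y) * (star v ⬝ᵥ y) := by
  rw [vecMulVec_mulVec, op_smul_eq_smul, dotProduct_smul, smul_eq_mul, star_dotProduct,
    star_star, mul_comm]

lemma re_star_dotProduct_projector_mulVec (v w y : n → ℂ) (a b : ℝ) :
    (star y ⬝ᵥ ((a : ℂ)⁻¹ • vecMulVec v (star v) + (b : ℂ)⁻¹ • vecMulVec w (star w)) *ᵥ y).re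
      = Complex.normSq (star v ⬝ᵥ y) / a + Complex.normSq (star w ⬝ᵥ y) / b := by
  simp only [add_mulVec, smul_mulVec, dotProduct_add, dotProduct_smul,
    star_dotProduct_vecMulVec_star_mulVec, smul_eq_mul, Complex.star_def,
    ← Complex.normSq_eq_conj_mul_self, ← Complex.ofReal_inv, ← Complex.ofReal_mul,
    Complex.add_re, Complex.ofReal_re]
  ring

open scoped ComplexOrder in
lemma re_star_dotProduct_mul_conjTranspose_mulVec_nonneg (B : Matrix m n ℂ) (v : m → ℂ) :
    0 ≤ (star v ⬝ᵥ (B * Bᴴ) *ᵥ v).re := by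
  rw [star_dotProduct_mul_conjTranspose_mulVec]
  exact (Complex.nonneg_iff.mp (dotProduct_star_self_nonneg _)).1

lemma normSq_div_add_normSq_div_le_iSup_eigenvalues_mul [DecidableEq n] (F : Matrix m n ℂ)
    (v w : m → ℂ) {a b : ℝ} {P : Matrix m m ℂ}
    (hP : P = (a : ℂ)⁻¹ • vecMulVec v (star v) + (b : ℂ)⁻¹ • vecMulVec w (star w))
    (hH : (Fᴴ * P * F).IsHermitian) :
    Complex.normSq (star v ⬝ᵥ (F * Fᴴ) *ᵥ v) / a + Complex.normSq (star w ⬝ᵥ (F * Fᴴ) *ᵥ v) / b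
      ≤ (⨆ i, hH.eigenvalues i) * (star v ⬝ᵥ (F * Fᴴ) *ᵥ v).re := by
  subst hP
  have h := hH.re_dotProduct_mulVec_le_iSup_eigenvalues_mul (Fᴴ *ᵥ v)
  rwa [star_dotProduct_conjTranspose_mul_mul_mulVec, mulVec_mulVec, RCLike.re_to_complex,
    re_star_dotProduct_projector_mulVec, RCLike.re_to_complex,
    ← star_dotProduct_mul_conjTranspose_mulVec] at h

end QuadraticForms

lemma normSq_steer (M : ℕ) (u : ℝ) (n : Fin M) : Complex.normSq (steer M u n) = 1 := by
  rw [steer, Complex.normSq_eq_norm_sq, Complex.norm_exp]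
  simp

lemma sum_normSq_steer (M : ℕ) (u : ℝ) : ∑ n, Complex.normSq (steer M u n) = M := by
  simp [normSq_steer]

lemma normSq_steerPerp (M : ℕ) (u : ℝ) (n : Fin M) :
    Complex.normSq (steerPerp M u n) = ((n : ℝ) - ((M : ℝ) - 1) / 2) ^ 2 := by
  rw [steerPerp, Complex.normSq_mul, ← steer, normSq_steer, Complex.normSq_ofReal, mul_one, sq]

lemma sum_normSq_steerPerp (M : ℕ) (u : ℝ) :
    ∑ n, Complex.normSq (steerPerp M u n) = M * ((M : ℝ) ^ 2 - 1) / 12 := by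
  simp only [normSq_steerPerp, sum_fin_sub_half_sq]

lemma dsteer_eq (M : ℕ) (u : ℝ) :
    dsteer M u = (Complex.I * Real.pi) •
      (steerPerp M u + ((((M : ℝ) - 1) / 2 : ℝ) : ℂ) • steer M u) := by
  funext n
  simp only [dsteer, steerPerp, steer, Pi.smul_apply, Pi.add_apply, smul_eq_mul]
  push_cast
  ring

lemma im_star_dsteer_dotProduct (M : ℕ) (u : ℝ) (y : Fin M → ℂ) :
    (star (dsteer M u) ⬝ᵥ y).im = -Real.pi * ((star (steerPerp M u) ⬝ᵥ y).re
      + ((M : ℝ) - 1) / 2 * (star (steer M u) ⬝ᵥ y).re) := by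
  rw [dsteer_eq, star_smul, star_add, star_smul]
  simp only [smul_dotProduct, add_dotProduct, smul_eq_mul, Complex.star_def, map_mul,
    Complex.conj_I, Complex.conj_ofReal, Complex.mul_im, Complex.mul_re, Complex.add_re,
    Complex.neg_re, Complex.neg_im, Complex.I_re, Complex.I_im, Complex.ofReal_re,
    Complex.ofReal_im]
  ring

lemma normSq_le_of_rayleigh_bound {m S lam q : ℝ} (hm : 1 < m) (hS : 0 ≤ S)
    (hRayleigh : S ^ 2 / m + q / (m * (m ^ 2 - 1) / 12) ≤ lam * S) (hcond : lam / 4 ≤ S / m) :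
    q ≤ (m ^ 2 - 1) / 4 * S ^ 2 := by
  have hm0 : 0 < m := by linarith
  have ht : 0 < m * (m ^ 2 - 1) / 12 := by nlinarith
  have hlam : lam * S ≤ 4 * S ^ 2 / m := by
    calc lam * S ≤ 4 * (S / m) * S := by gcongr; linarith
      _ = 4 * S ^ 2 / m := by ring
  have hq : q / (m * (m ^ 2 - 1) / 12) ≤ 3 * S ^ 2 / m := by
    have : S ^ 2 / m + 3 * S ^ 2 / m = 4 * S ^ 2 / m := by ring
    linarith
  rw [div_le_iff₀ ht] at hq
  calc q ≤ 3 * S ^ 2 / m * (m * (m ^ 2 - 1) / 12) := hq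
    _ = (m ^ 2 - 1) / 4 * S ^ 2 := by field_simp; ring

lemma add_re_nonneg_of_normSq_le {m k S : ℝ} {z : ℂ} (hm : 0 ≤ m) (hk : 2 ≤ k) (hS : 0 ≤ S)
    (hz : Complex.normSq z ≤ (m ^ 2 - 1) / 4 * S ^ 2) :
    0 ≤ (2 * k - 1) / 6 * S + ((m - 1) / 2 * S + z.re) := by
  have hre : z.re ^ 2 ≤ (m / 2 * S) ^ 2 := by nlinarith [Complex.re_sq_le_normSq z]
  have := (abs_le_of_sq_le_sq' hre (by positivity)).1
  nlinarith

theorem stmt3_general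
    (M T Nv : ℕ) (hM : 2 ≤ M) (hNv : 2 ≤ Nv)
    (F : Matrix (Fin M) (Fin T) ℂ) (u : ℝ)
    (G : ℝ)
    (hG : G = Real.pi ^ 2 * ((Nv : ℝ) - 1) * (2 * (Nv : ℝ) - 1) / 6 *
        (star (steer M u) ⬝ᵥ ((F * Fᴴ) *ᵥ steer M u)).re
      - Real.pi * ((Nv : ℝ) - 1) *
        (star (dsteer M u) ⬝ᵥ ((F * Fᴴ) *ᵥ steer M u)).im)
    (P : Matrix (Fin M) (Fin M) ℂ)
    (hP : P = (((∑ n, Complex.normSq (steer M u n) : ℝ) : ℂ))⁻¹ •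
        vecMulVec (steer M u) (star (steer M u))
      + (((∑ n, Complex.normSq (steerPerp M u n) : ℝ) : ℂ))⁻¹ •
        vecMulVec (steerPerp M u) (star (steerPerp M u)))
    (hH : (Fᴴ * P * F).IsHermitian)
    (hcond : (star (steer M u) ⬝ᵥ ((F * Fᴴ) *ᵥ steer M u)).re /
        (∑ n, Complex.normSq (steer M u n))
      ≥ (⨆ i, hH.eigenvalues i) / 4) :
    0 ≤ G := by
  set φ := steer M u
  set S := (star φ ⬝ᵥ (F * Fᴴ) *ᵥ φ).re with hS
  set z := star (steerPerp M u) ⬝ᵥ (F * Fᴴ) *ᵥ φ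
  have hMR : (2 : ℝ) ≤ M := by exact_mod_cast hM
  have hNvR : (2 : ℝ) ≤ Nv := by exact_mod_cast hNv
  have hS0 : 0 ≤ S := re_star_dotProduct_mul_conjTranspose_mulVec_nonneg F φ
  have hRayleigh := normSq_div_add_normSq_div_le_iSup_eigenvalues_mul F φ (steerPerp M u) hP hH
  rw [sum_normSq_steer, sum_normSq_steerPerp] at hRayleigh
  have hz : Complex.normSq z ≤ ((M : ℝ) ^ 2 - 1) / 4 * S ^ 2 := by
    refine normSq_le_of_rayleigh_bound (by linarith) hS0 (le_trans ?_ hRayleigh)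
      (by rwa [sum_normSq_steer] at hcond)
    gcongr
    simpa only [sq, hS] using Complex.re_sq_le_normSq _
  have hbracket := add_re_nonneg_of_normSq_le (m := M) (by positivity) hNvR hS0 hz
  have hNv1 : (0 : ℝ) ≤ Nv - 1 := by linarith
  calc 0 ≤ Real.pi ^ 2 * ((Nv : ℝ) - 1)
        * ((2 * Nv - 1) / 6 * S + (((M : ℝ) - 1) / 2 * S + z.re)) :=
        mul_nonneg (mul_nonneg (sq_nonneg _) hNv1) hbracket
    _ = G := by rw [hG, im_star_dsteer_dotProduct]; ring

/-- if `φ_Mᴴ F Fᴴ φ_M / ‖φ_M‖² ≥ λ_max(Fᴴ P_{u,⊥} F)/4` then the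
aperture-gain term
`G = (π²(N_v−1)(2N_v−1)/6) φ_Mᴴ F Fᴴ φ_M − π(N_v−1) Im{(∂φ_M/∂u)ᴴ F Fᴴ φ_M}`
is non-negative. -/
theorem stmt3
    (M T Nv : ℕ) (hM : 2 ≤ M) (hNv : 2 ≤ Nv) (hT : 1 ≤ T)
    (F : Matrix (Fin M) (Fin T) ℂ) (u : ℝ)
    (G : ℝ)
    (hG : G = Real.pi ^ 2 * ((Nv : ℝ) - 1) * (2 * (Nv : ℝ) - 1) / 6 *
        (star (steer M u) ⬝ᵥ ((F * Fᴴ) *ᵥ steer M u)).re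
      - Real.pi * ((Nv : ℝ) - 1) *
        (star (dsteer M u) ⬝ᵥ ((F * Fᴴ) *ᵥ steer M u)).im)
    (P : Matrix (Fin M) (Fin M) ℂ)
    (hP : P = (((∑ n, Complex.normSq (steer M u n) : ℝ) : ℂ))⁻¹ •
        vecMulVec (steer M u) (star (steer M u))
      + (((∑ n, Complex.normSq (steerPerp M u n) : ℝ) : ℂ))⁻¹ •
        vecMulVec (steerPerp M u) (star (steerPerp M u)))
    (hH : (Fᴴ * P * F).IsHermitian)
    (hcond : (star (steer M u) ⬝ᵥ ((F * Fᴴ) *ᵥ steer M u)).re /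
        (∑ n, Complex.normSq (steer M u n))
      ≥ (⨆ i, hH.eigenvalues i) / 4) :
    0 ≤ G :=
  stmt3_general M T Nv hM hNv F u G hG P hP hH hcond
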